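/- arXiv:1406.2919 — 2 statements merged into one kernel-verified Lean document; each statement's English description precedes it below -/
import Mathlib

section
/- Let y : [0,a] → ℝ^N be absolutely continuous and τ ∈ C¹(ℝ^N, ℝ) with 0 < τ(x) < a for all x. Suppose there exists p' > 0 such that τ'(y(t))·y'(t) − 1 < −p' for a.e. t ∈ [0,a]. Define w(t) := τ(y(t)) − t. Then w(0) > 0, w(a) < 0, w is strictly decreasing on [0,a], and there is exactly one t₁ ∈ (0,a) with w(t₁) = 0. -/
/-!
Since `y` is the primitive of an integrable function it is absolutely continuous, and so is
`τ ∘ y`, because the `C¹` map `τ` is Lipschitz on the compact set `y '' [0, a]`. The fundamental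
theorem of calculus for absolutely continuous functions then gives
`w t - w s = ∫ r in s..t, (τ'(y r) (y' r) - 1) ≤ -p' (t - s)`, so `w` is strictly decreasing;
`0 < τ < a` gives `w 0 > 0 > w a`, and the intermediate value theorem gives the unique zero.
-/

open Set MeasureTheory

open scoped NNReal

section AbsolutelyContinuous

variable {a b : ℝ}

theorem AbsolutelyContinuousOnInterval.of_dist_le_mul {X Y : Type*} [PseudoMetricSpace X]
    [PseudoMetricSpace Y] {f : ℝ → X} {g : ℝ → Y} (hg : AbsolutelyContinuousOnInterval g a b)
    (K : ℝ≥0) (h : ∀ x ∈ uIcc a b, ∀ y ∈ uIcc a b, dist (f x) (f y) ≤ K * dist (g x) (g y)) :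
    AbsolutelyContinuousOnInterval f a b := by
  rw [absolutelyContinuousOnInterval_iff] at hg ⊢
  intro ε hε
  obtain ⟨δ, hδ, hgδ⟩ := hg (ε / (K + 1)) (by positivity)
  refine ⟨δ, hδ, fun E hE hEδ => ?_⟩
  calc ∑ i ∈ Finset.range E.1, dist (f (E.2 i).1) (f (E.2 i).2)
      ≤ ∑ i ∈ Finset.range E.1, (K + 1) * dist (g (E.2 i).1) (g (E.2 i).2) := by
        refine Finset.sum_le_sum fun i hi => (h _ (hE.1 i hi).1 _ (hE.1 i hi).2).trans ?_
        gcongr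
        linarith
    _ = (K + 1) * ∑ i ∈ Finset.range E.1, dist (g (E.2 i).1) (g (E.2 i).2) :=
        (Finset.mul_sum ..).symm
    _ < (K + 1) * (ε / (K + 1)) := by gcongr; exact hgδ E hE hEδ
    _ = ε := by field_simp

theorem LipschitzOnWith.comp_absolutelyContinuousOnInterval {X Y : Type*} [PseudoMetricSpace X]
    [PseudoMetricSpace Y] {φ : X → Y} {K : ℝ≥0} {s : Set X} {g : ℝ → X}
    (hφ : LipschitzOnWith K φ s) (hg : AbsolutelyContinuousOnInterval g a b)
    (hgs : MapsTo g (uIcc a b) s) : AbsolutelyContinuousOnInterval (φ ∘ g) a b :=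
  hg.of_dist_le_mul K fun _ hx _ hy => hφ.dist_le_mul _ (hgs hx) _ (hgs hy)

variable {E : Type*} [NormedAddCommGroup E] [NormedSpace ℝ E]

theorem ContDiff.comp_absolutelyContinuousOnInterval {F : Type*} [NormedAddCommGroup F]
    [NormedSpace ℝ F] {φ : E → F} (hφ : ContDiff ℝ 1 φ) {g : ℝ → E} (hg : AbsolutelyContinuousOnInterval g a b) :
    AbsolutelyContinuousOnInterval (φ ∘ g) a b := by
  obtain ⟨K, hK⟩ := hφ.locallyLipschitz.locallyLipschitzOn.exists_lipschitzOnWith_of_compact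
    (isCompact_uIcc.image_of_continuousOn hg.continuousOn)
  exact hK.comp_absolutelyContinuousOnInterval hg (mapsTo_image _ _)

theorem IntervalIntegrable.absolutelyContinuousOnInterval_primitive {f : ℝ → E} {c : ℝ}
    (hf : IntervalIntegrable f volume a b) (hc : c ∈ uIcc a b) :
    AbsolutelyContinuousOnInterval (fun x => ∫ t in c..x, f t) a b := by
  refine (hf.norm.absolutelyContinuousOnInterval_intervalIntegral hc).of_dist_le_mul 1
    fun x hx y hy => ?_
  have hcx := hf.mono_set (uIcc_subset_uIcc hc hx)
  have hcy := hf.mono_set (uIcc_subset_uIcc hc hy)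
  rw [NNReal.coe_one, one_mul, dist_eq_norm, Real.dist_eq,
    intervalIntegral.integral_interval_sub_left hcx hcy,
    intervalIntegral.integral_interval_sub_left hcx.norm hcy.norm]
  exact intervalIntegral.norm_integral_le_abs_integral_norm

theorem IntervalIntegrable.absolutelyContinuousOnInterval_of_eqOn_const_add_primitive
    {f y : ℝ → E} {c : ℝ} {x₀ : E} (hf : IntervalIntegrable f volume a b) (hc : c ∈ uIcc a b)
    (hy : EqOn y (fun t => x₀ + ∫ s in c..t, f s) (uIcc a b)) :
    AbsolutelyContinuousOnInterval y a b :=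
  (hf.absolutelyContinuousOnInterval_primitive hc).of_dist_le_mul 1 fun _ hs _ ht => by
    rw [hy hs, hy ht, dist_add_left, NNReal.coe_one, one_mul]

theorem IntervalIntegrable.ae_hasDerivAt_of_eqOn_const_add_primitive [CompleteSpace E]
    {f y : ℝ → E} {c : ℝ} {x₀ : E} (hf : IntervalIntegrable f volume a b) (hc : c ∈ uIcc a b)
    (hy : EqOn y (fun t => x₀ + ∫ s in c..t, f s) (Ioo a b)) :
    ∀ᵐ t ∂volume.restrict (Icc a b), HasDerivAt y (f t) t := by
  rw [Measure.restrict_congr_set Ioo_ae_eq_Icc.symm]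
  filter_upwards [ae_restrict_mem measurableSet_Ioo, ae_restrict_of_ae hf.ae_hasDerivAt_integral]
    with t ht hderiv
  have hprim := (hderiv (Icc_subset_uIcc (Ioo_subset_Icc_self ht)) c hc).const_add x₀
  exact hprim.congr_of_eventuallyEq (Filter.eventually_of_mem (Ioo_mem_nhds ht.1 ht.2) hy)

theorem AbsolutelyContinuousOnInterval.sub_le_mul_sub_of_ae_deriv_le {f : ℝ → ℝ} {C : ℝ}
    (hf : AbsolutelyContinuousOnInterval f a b) (hab : a ≤ b)
    (hf' : ∀ᵐ x ∂volume.restrict (Icc a b), deriv f x ≤ C) : f b - f a ≤ C * (b - a) := by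
  rw [← hf.integral_deriv_eq_sub]
  calc ∫ x in a..b, deriv f x ≤ ∫ _ in a..b, C :=
        intervalIntegral.integral_mono_ae_restrict hab hf.intervalIntegrable_deriv
          intervalIntegrable_const hf'
    _ = C * (b - a) := by rw [intervalIntegral.integral_const, smul_eq_mul, mul_comm]

theorem AbsolutelyContinuousOnInterval.comp_sub_le_mul_sub_of_ae_fderiv_le {φ : E → ℝ}
    (hφ : ContDiff ℝ 1 φ) {g g' : ℝ → E} {C : ℝ} (hg : AbsolutelyContinuousOnInterval g a b)
    (hab : a ≤ b) (hg' : ∀ᵐ t ∂volume.restrict (Icc a b), HasDerivAt g (g' t) t)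
    (hC : ∀ᵐ t ∂volume.restrict (Icc a b), fderiv ℝ φ (g t) (g' t) ≤ C) :
    φ (g b) - φ (g a) ≤ C * (b - a) := by
  refine (hφ.comp_absolutelyContinuousOnInterval hg).sub_le_mul_sub_of_ae_deriv_le hab ?_
  filter_upwards [hg', hC] with t hgt hCt
  rwa [((hφ.differentiable one_ne_zero (g t)).hasFDerivAt.comp_hasDerivAt t hgt).deriv]

end AbsolutelyContinuous

theorem StrictAntiOn.existsUnique_eq_zero {f : ℝ → ℝ} {a b : ℝ} (hab : a ≤ b)
    (hf : StrictAntiOn f (Icc a b)) (hc : ContinuousOn f (Icc a b)) (ha : 0 < f a)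
    (hb : f b < 0) : ∃! x, x ∈ Ioo a b ∧ f x = 0 := by
  obtain ⟨x, hx, hfx⟩ := intermediate_value_Ioo' hab hc ⟨hb, ha⟩
  exact ⟨x, ⟨hx, hfx⟩, fun z ⟨hz, hfz⟩ =>
    hf.injOn (Ioo_subset_Icc_self hz) (Ioo_subset_Icc_self hx) (hfz.trans hfx.symm)⟩

/-- Exactly-one-jump argument: if `τ'(y(t))·y'(t) − 1 < −p'` a.e. on `[0,a]` and
`0 < τ(x) < a`, then `w(t) = τ(y(t)) − t` satisfies `w(0) > 0`, `w(a) < 0`, is strictly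
decreasing on `[0,a]`, and has exactly one zero `t₁ ∈ (0,a)`. -/
theorem stmt4 (a : ℝ) (ha : 0 < a) (N : ℕ)
    (y y' : ℝ → EuclideanSpace ℝ (Fin N))
    (hy' : IntegrableOn y' (Icc 0 a))
    (hy : ∀ t ∈ Icc 0 a, y t = y 0 + ∫ s in (0:ℝ)..t, y' s)
    (τ : EuclideanSpace ℝ (Fin N) → ℝ) (hτ : ContDiff ℝ 1 τ)
    (hτa : ∀ x, τ x ∈ Ioo 0 a)
    (p' : ℝ) (hp' : 0 < p')
    (hder : ∀ᵐ t ∂(volume.restrict (Icc 0 a)),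
      fderiv ℝ τ (y t) (y' t) - 1 < -p')
    (w : ℝ → ℝ) (hw : w = fun t => τ (y t) - t) :
    0 < w 0 ∧ w a < 0 ∧ StrictAntiOn w (Icc 0 a) ∧
      (∃! t₁, t₁ ∈ Ioo 0 a ∧ w t₁ = 0) := by
  subst hw
  have hy'i : IntervalIntegrable y' volume 0 a := (uIcc_of_le ha.le ▸ hy').intervalIntegrable
  have hyac : AbsolutelyContinuousOnInterval y 0 a :=
    hy'i.absolutelyContinuousOnInterval_of_eqOn_const_add_primitive left_mem_uIcc
      (by rw [uIcc_of_le ha.le]; exact hy)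
  have hyderiv : ∀ᵐ t ∂volume.restrict (Icc 0 a), HasDerivAt y (y' t) t :=
    hy'i.ae_hasDerivAt_of_eqOn_const_add_primitive left_mem_uIcc
      fun t ht => hy t (Ioo_subset_Icc_self ht)
  have hdecr : StrictAntiOn (fun t => τ (y t) - t) (Icc 0 a) := by
    intro s hs t ht hst
    have hsub : Icc s t ⊆ Icc 0 a := Icc_subset_Icc hs.1 ht.2
    have hyst : AbsolutelyContinuousOnInterval y s t :=
      hyac.mono (by rw [uIcc_of_le hst.le, uIcc_of_le ha.le]; exact hsub)
    have hle : τ (y t) - τ (y s) ≤ (1 - p') * (t - s) :=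
      hyst.comp_sub_le_mul_sub_of_ae_fderiv_le hτ hst.le
        (ae_restrict_of_ae_restrict_of_subset hsub hyderiv)
        (by filter_upwards [ae_restrict_of_ae_restrict_of_subset hsub hder] with r hr; linarith)
    nlinarith
  have hw0 : 0 < τ (y 0) - 0 := by simpa using (hτa (y 0)).1
  have hwa : τ (y a) - a < 0 := sub_neg.2 (hτa (y a)).2
  refine ⟨hw0, hwa, hdecr, hdecr.existsUnique_eq_zero ha.le ?_ hw0 hwa⟩
  exact (hτ.continuous.comp_continuousOn (uIcc_of_le ha.le ▸ hyac.continuousOn)).sub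
    continuousOn_id
end

section
/- Let y : [t₀,a] → ℝ^N be absolutely continuous, τ ∈ C¹(ℝ^N,ℝ), p' > 0, and suppose τ'(y(t))·y'(t) − 1 < −p' for a.e. t ∈ [t₀,a]. If τ(y(t₀)) − t₀ ≤ 0 then τ(y(t)) − t < 0 for all t ∈ (t₀,a]; in particular y does not hit the hypersurface {(t,x) : t = τ(x)} on (t₀,a]. -/
/-!
The function `τ ∘ y` is absolutely continuous: `y` is an indefinite integral, and the `C¹` map `τ`
is Lipschitz on a ball containing the compact range of `y`. By the fundamental theorem of calculus
for absolutely continuous functions and the a.e. chain rule, `τ (y t) - τ (y t₀)` is the integral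
of `τ'(y s) · y' s < 1 - p'`, so `τ (y t) - t ≤ τ (y t₀) - t₀ - p' (t - t₀) < 0`.
-/

open Set MeasureTheory Filter

namespace AbsolutelyContinuousOnInterval

variable {a b : ℝ}

theorem of_dist_le_mul_s5 {X Y : Type*} [PseudoMetricSpace X] [PseudoMetricSpace Y]
    {f : ℝ → X} {g : ℝ → Y} (hg : AbsolutelyContinuousOnInterval g a b) (K : ℝ)
    (hfg : ∀ u ∈ uIcc a b, ∀ v ∈ uIcc a b, dist (f u) (f v) ≤ K * dist (g u) (g v)) :
    AbsolutelyContinuousOnInterval f a b := by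
  have hK : Tendsto (fun E : ℕ × (ℕ → ℝ × ℝ) ↦
      K * ∑ i ∈ Finset.range E.1, dist (g (E.2 i).1) (g (E.2 i).2))
      (totalLengthFilter ⊓ 𝓟 (disjWithin a b)) (nhds 0) := by
    simpa only [mul_zero] using Tendsto.const_mul K hg
  refine squeeze_zero' (Eventually.of_forall fun _ ↦ Finset.sum_nonneg fun _ _ ↦ dist_nonneg)
    ?_ hK
  filter_upwards [mem_inf_of_right (mem_principal_self _)] with E hE
  rw [Finset.mul_sum]
  exact Finset.sum_le_sum fun i hi ↦ hfg _ (hE.1 i hi).1 _ (hE.1 i hi).2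

variable {E : Type*} [SeminormedAddCommGroup E]

theorem const_add {f : ℝ → E} (hf : AbsolutelyContinuousOnInterval f a b) (c : E) :
    AbsolutelyContinuousOnInterval (fun x ↦ c + f x) a b :=
  hf.of_dist_le_mul_s5 1 fun u _ v _ ↦ by rw [one_mul, dist_add_left]

theorem sub_le_mul_of_ae_deriv_le {f : ℝ → ℝ} {C : ℝ} (hab : a ≤ b)
    (hf : AbsolutelyContinuousOnInterval f a b) (hf' : ∀ᵐ x, x ∈ Icc a b → deriv f x ≤ C) :
    f b - f a ≤ C * (b - a) := by
  rw [← hf.integral_deriv_eq_sub]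
  calc ∫ x in a..b, deriv f x ≤ ∫ _ in a..b, C :=
        intervalIntegral.integral_mono_ae_restrict hab hf.intervalIntegrable_deriv
          intervalIntegrable_const ((ae_restrict_iff' measurableSet_Icc).2 hf')
    _ = C * (b - a) := by rw [intervalIntegral.integral_const, smul_eq_mul, mul_comm]

end AbsolutelyContinuousOnInterval

variable {E F : Type*} [NormedAddCommGroup E] [NormedSpace ℝ E]
  [NormedAddCommGroup F] [NormedSpace ℝ F] {a b c : ℝ}

theorem IntervalIntegrable.absolutelyContinuousOnInterval_intervalIntegral' {f : ℝ → E}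
    (hf : IntervalIntegrable f volume a b) (hc : c ∈ uIcc a b) :
    AbsolutelyContinuousOnInterval (fun x ↦ ∫ v in c..x, f v) a b := by
  refine (hf.norm.absolutelyContinuousOnInterval_intervalIntegral hc).of_dist_le_mul_s5 1
    fun u hu v hv ↦ ?_
  have hcu : IntervalIntegrable f volume c u := hf.mono_set (uIcc_subset_uIcc hc hu)
  have hcv : IntervalIntegrable f volume c v := hf.mono_set (uIcc_subset_uIcc hc hv)
  rw [one_mul, dist_eq_norm, dist_eq_norm, intervalIntegral.integral_interval_sub_left hcu hcv,
    intervalIntegral.integral_interval_sub_left hcu.norm hcv.norm, Real.norm_eq_abs]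
  exact intervalIntegral.norm_integral_le_abs_integral_norm

theorem ContDiff.comp_absolutelyContinuousOnInterval_s5 [FiniteDimensional ℝ E] {φ : E → F}
    (hφ : ContDiff ℝ 1 φ) {f : ℝ → E} (hf : AbsolutelyContinuousOnInterval f a b) :
    AbsolutelyContinuousOnInterval (fun x ↦ φ (f x)) a b := by
  obtain ⟨R, hR⟩ := hf.exists_bound
  obtain ⟨K, hK⟩ := hφ.contDiffOn.exists_lipschitzOnWith one_ne_zero
    (convex_closedBall (0 : E) R) (isCompact_closedBall 0 R)
  exact hf.of_dist_le_mul_s5 K fun u hu v hv ↦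
    hK.dist_le_mul _ (mem_closedBall_zero_iff.2 (hR u hu)) _ (mem_closedBall_zero_iff.2 (hR v hv))

theorem IntervalIntegrable.ae_hasDerivAt_comp_add_intervalIntegral [CompleteSpace E]
    {f : ℝ → E} (hf : IntervalIntegrable f volume a b) (hc : c ∈ uIcc a b) (y₀ : E)
    {φ : E → F} (hφ : Differentiable ℝ φ) :
    ∀ᵐ x, x ∈ uIcc a b → HasDerivAt (fun t ↦ φ (y₀ + ∫ s in c..t, f s))
      (fderiv ℝ φ (y₀ + ∫ s in c..x, f s) (f x)) x := by
  filter_upwards [hf.ae_hasDerivAt_integral] with x hx hxab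
  exact (hφ _).hasFDerivAt.comp_hasDerivAt x ((hx hxab c hc).const_add y₀)

theorem stmt5_general (t₀ a : ℝ) (N : ℕ)
    (y y' : ℝ → EuclideanSpace ℝ (Fin N))
    (hy' : IntegrableOn y' (Icc t₀ a))
    (hy : ∀ t ∈ Icc t₀ a, y t = y t₀ + ∫ s in t₀..t, y' s)
    (τ : EuclideanSpace ℝ (Fin N) → ℝ) (hτ : ContDiff ℝ 1 τ)
    (p' : ℝ) (hp' : 0 < p')
    (hder : ∀ᵐ t ∂(volume.restrict (Icc t₀ a)),
      fderiv ℝ τ (y t) (y' t) - 1 < -p')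
    (hstart : τ (y t₀) - t₀ ≤ 0) :
    (∀ t ∈ Ioc t₀ a, τ (y t) - t < 0) ∧ (∀ t ∈ Ioc t₀ a, t ≠ τ (y t)) := by
  have hdrift : ∀ t ∈ Ioc t₀ a, τ (y t) - τ (y t₀) ≤ (1 - p') * (t - t₀) := by
    intro t ht
    have hsub : Icc t₀ t ⊆ Icc t₀ a := Icc_subset_Icc_right ht.2
    have hint : IntervalIntegrable y' volume t₀ t := by
      rw [intervalIntegrable_iff_integrableOn_Icc_of_le ht.1.le]
      exact hy'.mono_set hsub
    have hAC : AbsolutelyContinuousOnInterval (fun s ↦ τ (y t₀ + ∫ r in t₀..s, y' r)) t₀ t :=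
      hτ.comp_absolutelyContinuousOnInterval_s5
        ((hint.absolutelyContinuousOnInterval_intervalIntegral' left_mem_uIcc).const_add _)
    have hslope : ∀ᵐ s, s ∈ Icc t₀ t →
        deriv (fun s ↦ τ (y t₀ + ∫ r in t₀..s, y' r)) s ≤ 1 - p' := by
      filter_upwards [hint.ae_hasDerivAt_comp_add_intervalIntegral left_mem_uIcc (y t₀)
        (hτ.differentiable one_ne_zero), (ae_restrict_iff' measurableSet_Icc).1 hder]
        with s hchain hs hst
      rw [(hchain (Icc_subset_uIcc hst)).deriv, ← hy s (hsub hst)]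
      linarith [hs (hsub hst)]
    have := hAC.sub_le_mul_of_ae_deriv_le ht.1.le hslope
    rwa [← hy t (Ioc_subset_Icc_self ht), intervalIntegral.integral_same, add_zero] at this
  have hneg : ∀ t ∈ Ioc t₀ a, τ (y t) - t < 0 := fun t ht ↦ by
    nlinarith [hdrift t ht, ht.1]
  exact ⟨hneg, fun t ht heq ↦ by linarith [hneg t ht]⟩

/-- After a jump: if `τ'(y(t))·y'(t) − 1 < −p'` a.e. on `[t₀,a]` and `τ(y(t₀)) − t₀ ≤ 0`,
then `τ(y(t)) − t < 0` on `(t₀,a]`, so the solution does not hit `{t = τ(x)}` again. -/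
theorem stmt5 (t₀ a : ℝ) (ht₀a : t₀ < a) (N : ℕ)
    (y y' : ℝ → EuclideanSpace ℝ (Fin N))
    (hy' : IntegrableOn y' (Icc t₀ a))
    (hy : ∀ t ∈ Icc t₀ a, y t = y t₀ + ∫ s in t₀..t, y' s)
    (τ : EuclideanSpace ℝ (Fin N) → ℝ) (hτ : ContDiff ℝ 1 τ)
    (p' : ℝ) (hp' : 0 < p')
    (hder : ∀ᵐ t ∂(volume.restrict (Icc t₀ a)),
      fderiv ℝ τ (y t) (y' t) - 1 < -p')
    (hstart : τ (y t₀) - t₀ ≤ 0) :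
    (∀ t ∈ Ioc t₀ a, τ (y t) - t < 0) ∧ (∀ t ∈ Ioc t₀ a, t ≠ τ (y t)) :=
  stmt5_general t₀ a N y y' hy' hy τ hτ p' hp' hder hstart
end
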